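/- Let φ : B'_1 → ℝ be Lipschitz with constant K, φ(0) = 0, and Ω₁ = {x ∈ B₁ : xₙ > φ(x')}. Let {Q_k} be a Whitney decomposition of Ω₁ with Q̃_k = (6/5)Q_k, and let d_k = diam(Q_k). Then for any q > n − 1, the sum over all k with Q̃_k ⊂ Ω₁ ∩ B_{1/4} of d_k^q is bounded by a constant C depending only on n, q and K. -/

import Mathlib

open Metric MeasureTheory

/-- The closed cube with center `c` and side length `l`, sides parallel to the axes. -/
def cube {n : ℕ} (c : EuclideanSpace ℝ (Fin n)) (l : ℝ) : Set (EuclideanSpace ℝ (Fin n)) :=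
  {x | ∀ i, |x i - c i| ≤ l / 2}

/-- The distance between two sets. -/
noncomputable def setDist {X : Type*} [PseudoMetricSpace X] (E F : Set X) : ℝ :=
  sInf ((fun p : X × X => dist p.1 p.2) '' (E ×ˢ F))

/-- The projection of `x = (x', xₙ)` onto its first `m` coordinates `x'`. -/
def proj {m : ℕ} (x : EuclideanSpace ℝ (Fin (m + 1))) : EuclideanSpace ℝ (Fin m) :=
  WithLp.toLp 2 (fun i : Fin m => x i.castSucc)

/-- The last coordinate `xₙ` of `x = (x', xₙ)`. -/
def lastCoord {m : ℕ} (x : EuclideanSpace ℝ (Fin (m + 1))) : ℝ := x (Fin.last m)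

namespace Whit
variable {n m : ℕ}

lemma abs_coord_sub_le_dist (x y : EuclideanSpace ℝ (Fin n)) (i : Fin n) :
    |x i - y i| ≤ dist x y := by
  rw [EuclideanSpace.dist_eq]
  rw [show |x i - y i| = Real.sqrt ((x i - y i) ^ 2) from (Real.sqrt_sq_eq_abs _).symm]
  apply Real.sqrt_le_sqrt
  rw [show (x i - y i) ^ 2 = dist (x i) (y i) ^ 2 by rw [Real.dist_eq, sq_abs]]
  exact Finset.single_le_sum (f := fun j => dist (x j) (y j) ^ 2)
    (fun j _ => sq_nonneg _) (Finset.mem_univ i)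

lemma abs_coord_le_norm (x : EuclideanSpace ℝ (Fin n)) (i : Fin n) :
    |x i| ≤ ‖x‖ := by
  have := abs_coord_sub_le_dist x 0 i
  simpa [dist_eq_norm] using this

lemma dist_le_of_coords {x y : EuclideanSpace ℝ (Fin n)} {r : ℝ} (hr : 0 ≤ r)
    (h : ∀ i, |x i - y i| ≤ r) : dist x y ≤ Real.sqrt n * r := by
  rw [EuclideanSpace.dist_eq]
  have : ∑ i, dist (x i) (y i) ^ 2 ≤ n * r ^ 2 := by
    calc ∑ i, dist (x i) (y i) ^ 2 ≤ ∑ _i : Fin n, r ^ 2 := by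
          apply Finset.sum_le_sum
          intro i _
          rw [Real.dist_eq]
          exact pow_le_pow_left₀ (abs_nonneg _) (h i) 2
      _ = n * r ^ 2 := by simp [Finset.sum_const, mul_comm]
  calc Real.sqrt (∑ i, dist (x i) (y i) ^ 2) ≤ Real.sqrt (n * r ^ 2) := Real.sqrt_le_sqrt this
    _ = Real.sqrt n * r := by
        rw [Real.sqrt_mul (by positivity), Real.sqrt_sq hr]

lemma mem_cube_self {c : EuclideanSpace ℝ (Fin n)} {l : ℝ} (hl : 0 ≤ l) :
    c ∈ cube c l := fun i => by simp [hl]; positivity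

lemma cube_subset_cube {c : EuclideanSpace ℝ (Fin n)} {l l' : ℝ} (h : l ≤ l') :
    cube c l ⊆ cube c l' := fun x hx i => (hx i).trans (by linarith)

lemma diam_cube {c : EuclideanSpace ℝ (Fin n)} {l : ℝ} (hl : 0 ≤ l) :
    Metric.diam (cube c l) = Real.sqrt n * l := by
  apply le_antisymm
  · apply Metric.diam_le_of_forall_dist_le (by positivity)
    intro x hx y hy
    apply dist_le_of_coords hl
    intro i
    calc |x i - y i| ≤ |x i - c i| + |c i - y i| := abs_sub_le _ _ _
      _ ≤ l / 2 + l / 2 := add_le_add (hx i) (by rw [abs_sub_comm]; exact hy i)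
      _ = l := by ring
  · set a : EuclideanSpace ℝ (Fin n) := WithLp.toLp 2 (fun i => c i + l / 2) with ha
    set b : EuclideanSpace ℝ (Fin n) := WithLp.toLp 2 (fun i => c i - l / 2) with hb
    have haQ : a ∈ cube c l := fun i => by
      simp only [ha, cube, Set.mem_setOf_eq, PiLp.toLp_apply]
      have : c i + l / 2 - c i = l / 2 := by ring
      rw [this, abs_of_nonneg (by positivity)]
    have hbQ : b ∈ cube c l := fun i => by
      simp only [hb, cube, Set.mem_setOf_eq, PiLp.toLp_apply]
      have : c i - l / 2 - c i = -(l/2) := by ring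
      rw [this, abs_neg, abs_of_nonneg (by positivity)]
    have hdist : dist a b = Real.sqrt n * l := by
      rw [EuclideanSpace.dist_eq]
      have : ∀ i : Fin n, dist (a i) (b i) ^ 2 = l ^ 2 := by
        intro i
        rw [Real.dist_eq]
        have : a i - b i = l := by simp only [ha, hb, PiLp.toLp_apply]; ring
        rw [this, sq_abs]
      rw [Finset.sum_congr rfl fun i _ => this i, Finset.sum_const, Finset.card_univ,
        Fintype.card_fin, nsmul_eq_mul, Real.sqrt_mul (by positivity), Real.sqrt_sq hl]
    calc Real.sqrt n * l = dist a b := hdist.symm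
      _ ≤ Metric.diam (cube c l) := Metric.dist_le_diam_of_mem ?_ haQ hbQ
    apply Metric.isBounded_closedBall (x := c) (r := Real.sqrt n * l) |>.subset
    intro x hx
    rw [Metric.mem_closedBall]
    calc dist x c ≤ Real.sqrt n * (l/2) := dist_le_of_coords (by positivity) hx
      _ ≤ Real.sqrt n * l := by
          apply mul_le_mul_of_nonneg_left (by linarith) (Real.sqrt_nonneg _)

lemma dist_proj_le (x y : EuclideanSpace ℝ (Fin (m + 1))) :
    dist (proj x) (proj y) ≤ dist x y := by
  rw [EuclideanSpace.dist_eq, EuclideanSpace.dist_eq]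
  apply Real.sqrt_le_sqrt
  rw [Fin.sum_univ_castSucc (f := fun i => dist (x i) (y i) ^ 2)]
  have : ∑ i : Fin m, dist (proj x i) (proj y i) ^ 2
      = ∑ i : Fin m, dist (x i.castSucc) (y i.castSucc) ^ 2 := rfl
  rw [this]
  have h2 : 0 ≤ dist (x (Fin.last m)) (y (Fin.last m)) ^ 2 := sq_nonneg _
  linarith

lemma lipschitz_lastCoord : LipschitzWith 1 (lastCoord (m := m)) := by
  apply LipschitzWith.of_dist_le_mul
  intro x y
  rw [Real.dist_eq]
  simpa [lastCoord] using abs_coord_sub_le_dist x y (Fin.last m)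

lemma lipschitz_proj : LipschitzWith 1 (proj (m := m)) := by
  apply LipschitzWith.of_dist_le_mul
  intro x y
  simpa using dist_proj_le x y

lemma norm_proj_le (x : EuclideanSpace ℝ (Fin (m + 1))) : ‖proj x‖ ≤ ‖x‖ := by
  have h0 : proj (0 : EuclideanSpace ℝ (Fin (m + 1))) = 0 := rfl
  have := dist_proj_le x 0
  rw [h0] at this
  simpa [dist_eq_norm] using this

lemma u_pow_identity (q : ℝ) (m j : ℕ) :
    ((2:ℝ)⁻¹ ^ j) ^ q * ((2:ℝ)⁻¹ ^ j) / ((2:ℝ)⁻¹ ^ j) ^ (m + 1)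
      = (((2:ℝ)⁻¹) ^ (q - (m:ℝ))) ^ j := by
  have h2 : (0:ℝ) ≤ 2⁻¹ := by norm_num
  rw [← Real.rpow_natCast ((2:ℝ)⁻¹) j]
  rw [← Real.rpow_natCast (((2:ℝ)⁻¹) ^ ((j:ℕ):ℝ)) (m + 1)]
  rw [← Real.rpow_natCast (((2:ℝ)⁻¹) ^ (q - (m:ℝ))) j]
  rw [← Real.rpow_mul h2, ← Real.rpow_mul h2, ← Real.rpow_mul h2]
  rw [← Real.rpow_add (by norm_num : (0:ℝ) < 2⁻¹), ← Real.rpow_sub (by norm_num : (0:ℝ) < 2⁻¹)]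
  congr 1
  push_cast
  ring

lemma volume_interior_cube_ge (c : EuclideanSpace ℝ (Fin n)) (l : ℝ) :
    ENNReal.ofReal l ^ n ≤ volume (interior (cube c l)) := by
  set O : Set (EuclideanSpace ℝ (Fin n)) := {x | ∀ i, |x i - c i| < l / 2} with hO
  have hOopen : IsOpen O := by
    have : O = ⋂ i, (fun x : EuclideanSpace ℝ (Fin n) => x i - c i) ⁻¹' Set.Ioo (-(l/2)) (l/2) := by
      ext x
      simp only [hO, Set.mem_setOf_eq, Set.mem_iInter, Set.mem_preimage, Set.mem_Ioo]
      constructor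
      · intro h i; exact abs_lt.mp (h i)
      · intro h i; exact abs_lt.mpr (h i)
    rw [this]
    apply isOpen_iInter_of_finite
    intro i
    apply IsOpen.preimage _ isOpen_Ioo
    exact Continuous.sub (EuclideanSpace.proj i).continuous continuous_const
  have hsub : O ⊆ interior (cube c l) :=
    hOopen.subset_interior_iff.mpr (fun x hx i => (hx i).le)
  have hOvol : volume O = ENNReal.ofReal l ^ n := by
    have hOeq : O = (MeasurableEquiv.toLp 2 (Fin n → ℝ)).symm ⁻¹'
        (Set.univ.pi fun i => Set.Ioo (c i - l / 2) (c i + l / 2)) := by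
      ext x
      have hme : (MeasurableEquiv.toLp 2 (Fin n → ℝ)).symm x = (fun i => x i) := rfl
      simp only [hO, Set.mem_setOf_eq, Set.mem_preimage, Set.mem_pi, Set.mem_univ, true_implies,
        Set.mem_Ioo, hme]
      constructor
      · intro h i; have := abs_lt.mp (h i); constructor <;> linarith [this.1, this.2]
      · intro h i; rw [abs_lt]; have := h i; constructor <;> linarith [this.1, this.2]
    rw [hOeq, (EuclideanSpace.volume_preserving_symm_measurableEquiv_toLp (Fin n)).measure_preimage
      (MeasurableSet.univ_pi fun i => measurableSet_Ioo).nullMeasurableSet]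
    rw [volume_pi_pi]
    have : ∀ i : Fin n, volume (Set.Ioo (c i - l / 2) (c i + l / 2)) = ENNReal.ofReal l := by
      intro i; rw [Real.volume_Ioo]; congr 1; ring
    rw [Finset.prod_congr rfl fun i _ => this i, Finset.prod_const, Finset.card_univ,
      Fintype.card_fin]
  rw [← hOvol]
  exact measure_mono hsub

lemma volume_slab_le (ψ : (Fin m → ℝ) → ℝ) (hψ : Continuous ψ) (δ : ℝ) :
    volume {x : EuclideanSpace ℝ (Fin (m + 1)) |
        (∀ i : Fin m, |x i.castSucc| ≤ 1) ∧ |x (Fin.last m) - ψ (fun i => x i.castSucc)| ≤ δ} ≤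
      ENNReal.ofReal (2 * δ) * ENNReal.ofReal 2 ^ m := by
  set T' : Set (ℝ × (Fin m → ℝ)) :=
    {p | (∀ i, |p.2 i| ≤ 1) ∧ |p.1 - ψ p.2| ≤ δ} with hT'
  have hT'closed : IsClosed T' := by
    have h1 : IsClosed {p : ℝ × (Fin m → ℝ) | ∀ i, |p.2 i| ≤ 1} := by
      have : {p : ℝ × (Fin m → ℝ) | ∀ i, |p.2 i| ≤ 1} =
          ⋂ i, (fun p : ℝ × (Fin m → ℝ) => p.2 i) ⁻¹' Set.Icc (-1) 1 := by
        ext p; simp [abs_le, Set.mem_iInter]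
      rw [this]
      exact isClosed_iInter fun i =>
        IsClosed.preimage ((continuous_apply i).comp continuous_snd) isClosed_Icc
    have h2 : IsClosed {p : ℝ × (Fin m → ℝ) | |p.1 - ψ p.2| ≤ δ} := by
      have : {p : ℝ × (Fin m → ℝ) | |p.1 - ψ p.2| ≤ δ} =
          (fun p : ℝ × (Fin m → ℝ) => p.1 - ψ p.2) ⁻¹' Set.Icc (-δ) δ := by
        ext p; simp [abs_le]
      rw [this]
      exact IsClosed.preimage (continuous_fst.sub (hψ.comp continuous_snd)) isClosed_Icc
    exact h1.inter h2
  have heq : {x : EuclideanSpace ℝ (Fin (m + 1)) |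
        (∀ i : Fin m, |x i.castSucc| ≤ 1) ∧ |x (Fin.last m) - ψ (fun i => x i.castSucc)| ≤ δ} =
      (MeasurableEquiv.toLp 2 (Fin (m+1) → ℝ)).symm ⁻¹'
        ((MeasurableEquiv.piFinSuccAbove (fun _ => ℝ) (Fin.last m)) ⁻¹' T') := by
    ext x
    simp only [Set.mem_preimage, hT', Set.mem_setOf_eq,
      MeasurableEquiv.piFinSuccAbove_apply, Fin.insertNthEquiv, Equiv.coe_fn_symm_mk]
    constructor
    · rintro ⟨h1, h2⟩
      constructor
      · intro i; simpa [Fin.succAbove_last, Fin.init] using h1 i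
      · simpa [Fin.succAbove_last, Fin.init_def] using h2
    · rintro ⟨h1, h2⟩
      constructor
      · intro i; simpa [Fin.succAbove_last, Fin.init] using h1 i
      · simpa [Fin.succAbove_last, Fin.init_def] using h2
  rw [heq]
  rw [(EuclideanSpace.volume_preserving_symm_measurableEquiv_toLp (Fin (m+1))).measure_preimage
    ((hT'closed.measurableSet.preimage (MeasurableEquiv.piFinSuccAbove (fun _ => ℝ)
      (Fin.last m)).measurable).nullMeasurableSet)]
  rw [(volume_preserving_piFinSuccAbove (fun _ : Fin (m+1) => ℝ) (Fin.last m)).measure_preimage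
    hT'closed.measurableSet.nullMeasurableSet]
  have : (volume : Measure (ℝ × (Fin m → ℝ))) T' = ∫⁻ y, volume ((fun t => (t, y)) ⁻¹' T') := by
    rw [Measure.volume_eq_prod]
    exact Measure.prod_apply_symm hT'closed.measurableSet
  rw [this]
  set A : Set (Fin m → ℝ) := Set.univ.pi fun _ => Set.Icc (-1 : ℝ) 1 with hA
  have hAmeas : MeasurableSet A := MeasurableSet.univ_pi fun _ => measurableSet_Icc
  have hbound : ∀ y, volume ((fun t => (t, y)) ⁻¹' T') ≤
      A.indicator (fun _ => ENNReal.ofReal (2 * δ)) y := by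
    intro y
    by_cases hy : y ∈ A
    · rw [Set.indicator_of_mem hy]
      have : (fun t => (t, y)) ⁻¹' T' ⊆ Set.Icc (ψ y - δ) (ψ y + δ) := by
        intro t ht
        have := ht.2
        rw [abs_le] at this
        exact ⟨by linarith [this.1], by linarith [this.2]⟩
      calc volume ((fun t => (t, y)) ⁻¹' T') ≤ volume (Set.Icc (ψ y - δ) (ψ y + δ)) :=
            measure_mono this
        _ = ENNReal.ofReal (2 * δ) := by rw [Real.volume_Icc]; congr 1; ring
    · rw [Set.indicator_of_notMem hy]
      have : (fun t => (t, y)) ⁻¹' T' = ∅ := by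
        ext t
        simp only [Set.mem_preimage, hT', Set.mem_setOf_eq, Set.mem_empty_iff_false, iff_false]
        intro h
        exact hy (fun i _ => by rw [Set.mem_Icc, ← abs_le]; exact h.1 i)
      simp [this]
  calc ∫⁻ y, volume ((fun t => (t, y)) ⁻¹' T')
      ≤ ∫⁻ y, A.indicator (fun _ => ENNReal.ofReal (2 * δ)) y := lintegral_mono hbound
    _ = ENNReal.ofReal (2 * δ) * volume A := by
        rw [lintegral_indicator hAmeas]; simp [Measure.restrict_apply]
    _ = ENNReal.ofReal (2 * δ) * ENNReal.ofReal 2 ^ m := by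
        congr 1
        rw [hA, volume_pi_pi]
        have : ∀ _i : Fin m, volume (Set.Icc (-1 : ℝ) 1) = ENNReal.ofReal 2 := by
          intro i; rw [Real.volume_Icc]; norm_num
        rw [Finset.prod_congr rfl fun i _ => this i, Finset.prod_const, Finset.card_univ,
          Fintype.card_fin]

end Whit

open Whit

set_option maxHeartbeats 2000000 in
/-- Lemma 2.2: for `q > n - 1` the sum of `d_k^q` over all Whitney cubes of `Ω₁`
whose `6/5`-dilations lie in `Ω₁ ∩ B_{1/4}` is bounded by a constant depending only
on `n`, `q` and `K`. -/
theorem whitney_diam_sum (m : ℕ) (hm : 1 ≤ m) (q K : ℝ) (hq : (m : ℝ) < q)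
    (hK : 0 ≤ K) :
    ∃ C : ℝ, 0 < C ∧
      ∀ φ : EuclideanSpace ℝ (Fin m) → ℝ,
        LipschitzOnWith (Real.toNNReal K) φ (ball (0 : EuclideanSpace ℝ (Fin m)) 1) →
        φ 0 = 0 →
        ∀ (Ω₁ : Set (EuclideanSpace ℝ (Fin (m + 1)))),
          Ω₁ = {x | x ∈ ball (0 : EuclideanSpace ℝ (Fin (m + 1))) 1 ∧ φ (proj x) < lastCoord x} →
          ∀ (c : ℕ → EuclideanSpace ℝ (Fin (m + 1))) (l : ℕ → ℝ), (∀ k, 0 < l k) →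
            (⋃ k, cube (c k) (l k)) = Ω₁ →
            (Pairwise fun i j =>
              Disjoint (interior (cube (c i) (l i))) (interior (cube (c j) (l j)))) →
            (∀ k, Metric.diam (cube (c k) (l k)) ≤ setDist (cube (c k) (l k)) (frontier Ω₁) ∧
              setDist (cube (c k) (l k)) (frontier Ω₁) ≤ 4 * Metric.diam (cube (c k) (l k))) →
            Summable (fun k : {k : ℕ // cube (c k) (6 / 5 * l k) ⊆
                Ω₁ ∩ ball (0 : EuclideanSpace ℝ (Fin (m + 1))) (1 / 4)} =>
              Metric.diam (cube (c k.1) (l k.1)) ^ q) ∧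
            (∑' k : {k : ℕ // cube (c k) (6 / 5 * l k) ⊆
                Ω₁ ∩ ball (0 : EuclideanSpace ℝ (Fin (m + 1))) (1 / 4)},
              Metric.diam (cube (c k.1) (l k.1)) ^ q) ≤ C := by
  classical
  set sqn : ℝ := Real.sqrt ((m : ℝ) + 1) with hsqn_def
  have hsqn1 : 1 ≤ sqn := by
    rw [show (1:ℝ) = Real.sqrt 1 from (Real.sqrt_one).symm]
    apply Real.sqrt_le_sqrt
    have : (1:ℝ) ≤ m := by exact_mod_cast hm
    linarith
  have hsqn0 : 0 < sqn := lt_of_lt_of_le one_pos hsqn1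
  set ρ : ℝ := ((2:ℝ)⁻¹) ^ (q - (m:ℝ)) with hρ_def
  have hρ0 : 0 < ρ := Real.rpow_pos_of_pos (by norm_num) _
  have hρ1 : ρ < 1 := Real.rpow_lt_one (by norm_num) (by norm_num) (by linarith)
  set C₀ : ℝ := sqn ^ q * sqn * (10 * (1 + K)) * 2 ^ (2*m+1) with hC₀_def
  have hC₀pos : 0 < C₀ := by
    have h1 : 0 < sqn ^ q := Real.rpow_pos_of_pos hsqn0 _
    positivity
  refine ⟨C₀ * (1 - ρ)⁻¹, mul_pos hC₀pos (inv_pos.mpr (by linarith)), ?_⟩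
  intro φ hφ hφ0 Ω₁ hΩ c l hl hUnion hdisj hWhitney
  obtain ⟨ψ, hψlip, hψeq⟩ := LipschitzOnWith.extend_real hφ
  have hKcoe : ((Real.toNNReal K : NNReal) : ℝ) = K := Real.coe_toNNReal K hK
  -- the graph function
  set g : EuclideanSpace ℝ (Fin (m + 1)) → ℝ := fun x => lastCoord x - ψ (proj x) with hg_def
  have hgcont : Continuous g :=
    lipschitz_lastCoord.continuous.sub (hψlip.continuous.comp lipschitz_proj.continuous)
  have hψ0 : ψ 0 = 0 := by
    rw [← hψeq (by simp : (0 : EuclideanSpace ℝ (Fin m)) ∈ ball 0 1), hφ0]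
  have hΩeq : Ω₁ = ball 0 1 ∩ {x | 0 < g x} := by
    rw [hΩ]
    ext x
    simp only [Set.mem_inter_iff, Set.mem_setOf_eq, hg_def, sub_pos]
    constructor
    · rintro ⟨h1, h2⟩
      refine ⟨h1, ?_⟩
      rwa [← hψeq (mem_ball_zero_iff.mpr (lt_of_le_of_lt (norm_proj_le x)
        (mem_ball_zero_iff.mp h1)))]
    · rintro ⟨h1, h2⟩
      refine ⟨h1, ?_⟩
      rwa [hψeq (mem_ball_zero_iff.mpr (lt_of_le_of_lt (norm_proj_le x)
        (mem_ball_zero_iff.mp h1)))]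
  have hΩopen : IsOpen Ω₁ := by
    rw [hΩeq]
    exact isOpen_ball.inter (isOpen_lt continuous_const hgcont)
  -- 0 is on the frontier
  have h0fr : (0 : EuclideanSpace ℝ (Fin (m + 1))) ∈ frontier Ω₁ := by
    rw [frontier, hΩopen.interior_eq]
    constructor
    · rw [Metric.mem_closure_iff]
      intro ε hε
      set t : ℝ := min (ε / 2) (1 / 2) with ht_def
      have ht0 : 0 < t := lt_min (by linarith) (by norm_num)
      refine ⟨EuclideanSpace.single (Fin.last m) t, ?_, ?_⟩
      · rw [hΩeq]
        constructor
        · rw [mem_ball_zero_iff, EuclideanSpace.norm_single]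
          rw [Real.norm_eq_abs, abs_of_pos ht0]
          calc t ≤ 1/2 := min_le_right _ _
            _ < 1 := by norm_num
        · simp only [Set.mem_setOf_eq, hg_def, sub_pos]
          have hproj0 : proj (EuclideanSpace.single (Fin.last m) t) = 0 := by
            ext i
            simp only [proj, PiLp.toLp_apply, EuclideanSpace.single_apply]
            rw [if_neg (Fin.castSucc_lt_last i).ne]
            rfl
          have hlast : lastCoord (EuclideanSpace.single (Fin.last m) t) = t := by
            simp [lastCoord, EuclideanSpace.single_apply]
          rw [hproj0, hlast, hψ0]
          exact ht0
      · rw [dist_comm, dist_zero_right, EuclideanSpace.norm_single, Real.norm_eq_abs, abs_of_pos ht0]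
        calc t ≤ ε / 2 := min_le_left _ _
          _ < ε := by linarith
    · intro h0
      rw [hΩ] at h0
      have := h0.2
      have hp0 : proj (0 : EuclideanSpace ℝ (Fin (m+1))) = 0 := rfl
      have hl0 : lastCoord (0 : EuclideanSpace ℝ (Fin (m+1))) = 0 := rfl
      rw [hp0, hl0, hφ0] at this
      exact lt_irrefl 0 this
  -- frontier points inside the unit ball lie on the graph
  have hgraph : ∀ b ∈ frontier Ω₁, ‖b‖ < 1 → g b = 0 := by
    intro b hb hnb
    have hb1 : b ∈ closure Ω₁ := hb.1
    have hge : 0 ≤ g b := by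
      have hsub : Ω₁ ⊆ {x | 0 ≤ g x} := by
        rw [hΩeq]; intro x hx; exact le_of_lt (Set.mem_setOf_eq ▸ hx.2)
      have hcl : IsClosed {x : EuclideanSpace ℝ (Fin (m+1)) | 0 ≤ g x} :=
        isClosed_Ici.preimage hgcont
      exact (hcl.closure_subset_iff.mpr hsub) hb1
    have hnotmem : b ∉ Ω₁ := by
      rw [frontier, hΩopen.interior_eq] at hb
      exact hb.2
    have hle : g b ≤ 0 := by
      by_contra hpos
      push_neg at hpos
      exact hnotmem (by rw [hΩeq]; exact ⟨mem_ball_zero_iff.mpr hnb, hpos⟩)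
    linarith
  -- basic facts about cubes in the index set
  set S := {k : ℕ // cube (c k) (6 / 5 * l k) ⊆
    Ω₁ ∩ ball (0 : EuclideanSpace ℝ (Fin (m + 1))) (1 / 4)} with hS_def
  have hQsub : ∀ k : S, cube (c k.1) (l k.1) ⊆ Ω₁ ∩ ball 0 (1/4) := by
    intro k
    exact (cube_subset_cube (by linarith [hl k.1] : l k.1 ≤ 6/5 * l k.1)).trans k.2
  have hdiam : ∀ k : ℕ, Metric.diam (cube (c k) (l k)) = sqn * l k := by
    intro k
    rw [diam_cube (hl k).le]
    congr 1
    rw [hsqn_def]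
    congr 1
    push_cast
    ring
  have hlk_le : ∀ k : S, l k.1 ≤ 1/2 := by
    intro k
    have hsub : cube (c k.1) (l k.1) ⊆ ball (0 : EuclideanSpace ℝ (Fin (m+1))) (1/4) :=
      (hQsub k).trans Set.inter_subset_right
    have hd : Metric.diam (cube (c k.1) (l k.1)) ≤ 1/2 := by
      calc Metric.diam (cube (c k.1) (l k.1)) ≤ Metric.diam (ball (0:EuclideanSpace ℝ (Fin (m+1))) (1/4)) :=
            Metric.diam_mono hsub isBounded_ball
        _ ≤ 2 * (1/4) := Metric.diam_ball (by norm_num)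
        _ = 1/2 := by norm_num
    rw [hdiam k.1] at hd
    nlinarith [hl k.1, hsqn1]
  -- dyadic index
  have hex : ∀ k : ℕ, ∃ j : ℕ, (2:ℝ)⁻¹ ^ (j+1) < l k := by
    intro k
    obtain ⟨j, hj⟩ := exists_pow_lt_of_lt_one (hl k) (by norm_num : (2:ℝ)⁻¹ < 1)
    exact ⟨j, lt_of_le_of_lt (pow_le_pow_of_le_one (by norm_num) (by norm_num) (Nat.le_succ j)) hj⟩
  set jdx : ℕ → ℕ := fun k => Nat.find (hex k) with hjdx_def
  have hu1 : ∀ k : ℕ, (2:ℝ)⁻¹ ^ (jdx k + 1) < l k := fun k => Nat.find_spec (hex k)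
  have hu2 : ∀ k : S, l k.1 ≤ (2:ℝ)⁻¹ ^ (jdx k.1) := by
    intro k
    by_contra hcon
    push_neg at hcon
    rcases Nat.eq_zero_or_pos (jdx k.1) with h0 | hpos
    · rw [h0] at hcon
      simp at hcon
      have := hlk_le k
      linarith
    · have hlt : jdx k.1 - 1 < jdx k.1 := Nat.sub_lt hpos one_pos
      have := Nat.find_min (hex k.1) hlt
      rw [Nat.sub_add_cancel hpos] at this
      exact this hcon
  -- the extension as a function on the pi type
  set ψp : (Fin m → ℝ) → ℝ := fun y => ψ ((EuclideanSpace.equiv (Fin m) ℝ).symm y) with hψp_def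
  have hψpcont : Continuous ψp :=
    hψlip.continuous.comp (EuclideanSpace.equiv (Fin m) ℝ).symm.continuous
  have hψp_eq : ∀ x : EuclideanSpace ℝ (Fin (m+1)), ψp (fun i => x i.castSucc) = ψ (proj x) :=
    fun x => rfl
  -- the key slab estimate for cubes in S
  have hslab : ∀ k : S, ∀ x ∈ cube (c k.1) (l k.1),
      (∀ i : Fin m, |x i.castSucc| ≤ 1) ∧
      |x (Fin.last m) - ψp (fun i => x i.castSucc)| ≤ 5 * (1 + K) * (sqn * l k.1) := by
    intro k x hx
    have hxΩ : x ∈ Ω₁ := ((hQsub k) hx).1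
    have hxB : ‖x‖ < 1/4 := mem_ball_zero_iff.mp ((hQsub k) hx).2
    have hcoords : ∀ i : Fin m, |x i.castSucc| ≤ 1 := by
      intro i
      calc |x i.castSucc| ≤ ‖x‖ := abs_coord_le_norm x _
        _ ≤ 1 := by linarith
    refine ⟨hcoords, ?_⟩
    have hgx : 0 < g x := by
      rw [hΩeq] at hxΩ
      exact hxΩ.2
    have habs : |x (Fin.last m) - ψp (fun i => x i.castSucc)| = g x := by
      rw [hψp_eq x]
      exact abs_of_pos hgx
    rw [habs]
    set d : ℝ := sqn * l k.1 with hd_def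
    have hd0 : 0 < d := mul_pos hsqn0 (hl k.1)
    set sd : ℝ := setDist (cube (c k.1) (l k.1)) (frontier Ω₁) with hsd_def
    have hW := hWhitney k.1
    rw [hdiam k.1] at hW
    have hWl : d ≤ sd := hW.1
    have hWr : sd ≤ 4 * d := hW.2
    have hQne : (cube (c k.1) (l k.1)).Nonempty := ⟨c k.1, mem_cube_self (hl k.1).le⟩
    have himne : ((fun p : _ × _ => dist p.1 p.2) ''
        ((cube (c k.1) (l k.1)) ×ˢ (frontier Ω₁))).Nonempty :=
      ⟨dist (c k.1) 0, ⟨(c k.1, 0), ⟨mem_cube_self (hl k.1).le, h0fr⟩, rfl⟩⟩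
    have hsd_lt : sd < 1/4 := by
      have hle : sd ≤ dist (c k.1) 0 := by
        apply csInf_le
        · exact ⟨0, fun r hr => by
            obtain ⟨p, _, rfl⟩ := hr
            exact dist_nonneg⟩
        · exact ⟨(c k.1, 0), ⟨mem_cube_self (hl k.1).le, h0fr⟩, rfl⟩
      have : dist (c k.1) 0 < 1/4 := by
        rw [dist_zero_right]
        exact mem_ball_zero_iff.mp ((hQsub k) (mem_cube_self (hl k.1).le)).2
      linarith
    have hQbd : Bornology.IsBounded (cube (c k.1) (l k.1)) :=
      isBounded_ball.subset ((hQsub k).trans Set.inter_subset_right)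
    have hεbound : ∀ ε : ℝ, 0 < ε → ε ≤ 1/8 → g x ≤ (1 + K) * (5 * d) + (1 + K) * ε := by
      intro ε hε hε8
      obtain ⟨r, hrmem, hrlt⟩ := Real.lt_sInf_add_pos himne hε
      obtain ⟨⟨a, b⟩, hab, rfl⟩ := hrmem
      rw [Set.mem_prod] at hab
      obtain ⟨haQ, hbF⟩ := hab
      have hdxa : dist x a ≤ d := by
        rw [hd_def, ← hdiam k.1]
        exact Metric.dist_le_diam_of_mem hQbd hx haQ
      have hdxb : dist x b ≤ d + sd + ε := by
        calc dist x b ≤ dist x a + dist a b := dist_triangle _ _ _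
          _ ≤ d + (sd + ε) := add_le_add hdxa hrlt.le
          _ = d + sd + ε := by ring
      have hnb : ‖b‖ < 1 := by
        calc ‖b‖ = ‖x - (x - b)‖ := by congr 1; abel
          _ ≤ ‖x‖ + ‖x - b‖ := norm_sub_le _ _
          _ = ‖x‖ + dist x b := by rw [dist_eq_norm]
          _ < 1/4 + (d + sd + ε) := by linarith
          _ ≤ 1/4 + (sd + sd + ε) := by linarith
          _ < 1 := by linarith
      have hgb : g b = 0 := hgraph b hbF hnb
      have hstep : g x ≤ (1 + K) * dist x b := by
        have h1 : g x - g b ≤ |lastCoord x - lastCoord b| + |ψ (proj b) - ψ (proj x)| := by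
          simp only [hg_def]
          have : lastCoord x - ψ (proj x) - (lastCoord b - ψ (proj b))
              = (lastCoord x - lastCoord b) + (ψ (proj b) - ψ (proj x)) := by ring
          calc lastCoord x - ψ (proj x) - (lastCoord b - ψ (proj b))
              = (lastCoord x - lastCoord b) + (ψ (proj b) - ψ (proj x)) := this
            _ ≤ |lastCoord x - lastCoord b| + |ψ (proj b) - ψ (proj x)| :=
              add_le_add (le_abs_self _) (le_abs_self _)
        have h2 : |lastCoord x - lastCoord b| ≤ dist x b := by
          simpa [lastCoord] using abs_coord_sub_le_dist x b (Fin.last m)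
        have h3 : |ψ (proj b) - ψ (proj x)| ≤ K * dist x b := by
          have := hψlip.dist_le_mul (proj b) (proj x)
          rw [Real.dist_eq, hKcoe] at this
          calc |ψ (proj b) - ψ (proj x)| ≤ K * dist (proj b) (proj x) := this
            _ ≤ K * dist x b := by
                apply mul_le_mul_of_nonneg_left _ hK
                rw [dist_comm (proj b)]
                exact dist_proj_le x b
        calc g x = g x - g b := by rw [hgb]; ring
          _ ≤ |lastCoord x - lastCoord b| + |ψ (proj b) - ψ (proj x)| := h1
          _ ≤ dist x b + K * dist x b := add_le_add h2 h3
          _ = (1 + K) * dist x b := by ring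
      calc g x ≤ (1 + K) * dist x b := hstep
        _ ≤ (1 + K) * (d + sd + ε) := by
            apply mul_le_mul_of_nonneg_left hdxb (by linarith)
        _ ≤ (1 + K) * (5 * d + ε) := by
            apply mul_le_mul_of_nonneg_left _ (by linarith)
            linarith
        _ = (1 + K) * (5 * d) + (1 + K) * ε := by ring
    -- take ε → 0
    have hfinal : g x ≤ (1 + K) * (5 * d) := by
      by_contra hcon
      push_neg at hcon
      set P : ℝ := g x - (1 + K) * (5 * d) with hP_def
      have hP0 : 0 < P := by simp only [hP_def]; linarith
      set ε : ℝ := min (1/8) (P / (2 * (1 + K))) with hε_def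
      have hε0 : 0 < ε := lt_min (by norm_num) (by positivity)
      have hεle : ε ≤ 1/8 := min_le_left _ _
      have hεP : (1 + K) * ε ≤ P / 2 := by
        calc (1 + K) * ε ≤ (1 + K) * (P / (2 * (1 + K))) :=
              mul_le_mul_of_nonneg_left (min_le_right _ _) (by linarith)
          _ = P / 2 := by field_simp
      have hfin2 : g x ≤ g x - P / 2 := by
        calc g x ≤ (1 + K) * (5 * d) + (1 + K) * ε := hεbound ε hε0 hεle
          _ ≤ (1 + K) * (5 * d) + P / 2 := by linarith [hεP]
          _ = g x - P + P / 2 := by rw [hP_def]; ring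
          _ = g x - P / 2 := by ring
      linarith [hP0, hfin2]
    calc g x ≤ (1 + K) * (5 * d) := hfinal
      _ = 5 * (1 + K) * (sqn * l k.1) := by rw [hd_def]; ring
  -- per-dyadic-level estimate
  have hinner : ∀ j : ℕ,
      (∑' kk : {k : S // jdx k.1 = j},
        ENNReal.ofReal (Metric.diam (cube (c kk.1.1) (l kk.1.1)) ^ q))
      ≤ ENNReal.ofReal (C₀ * ρ ^ j) := by
    intro j
    set u : ℝ := (2:ℝ)⁻¹ ^ j with hu_def
    have hu0 : 0 < u := by positivity
    set δj : ℝ := 5 * (1 + K) * sqn * u with hδj_def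
    have hδj0 : 0 < δj := by positivity
    set aj : ℝ := (sqn * u) ^ q / (u / 2) ^ (m + 1) with haj_def
    have haj0 : 0 < aj := by
      apply div_pos (Real.rpow_pos_of_pos (by positivity) _) (by positivity)
    have hq0 : 0 < q := lt_of_le_of_lt (by positivity) hq
    -- step 1 : per cube bound
    have hstep1 : ∀ kk : {k : S // jdx k.1 = j},
        ENNReal.ofReal (Metric.diam (cube (c kk.1.1) (l kk.1.1)) ^ q)
          ≤ ENNReal.ofReal aj * volume (interior (cube (c kk.1.1) (l kk.1.1))) := by
      intro kk
      have hlu : l kk.1.1 ≤ u := by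
        have h := hu2 kk.1
        rw [kk.2] at h
        rw [hu_def]
        exact h
      have hul : u / 2 ≤ l kk.1.1 := by
        have := hu1 kk.1.1
        rw [kk.2] at this
        rw [hu_def]
        rw [pow_succ] at this
        calc (2:ℝ)⁻¹ ^ j / 2 = (2:ℝ)⁻¹ ^ j * 2⁻¹ := by ring
          _ ≤ l kk.1.1 := this.le
      have h1 : Metric.diam (cube (c kk.1.1) (l kk.1.1)) ^ q ≤ (sqn * u) ^ q := by
        rw [hdiam kk.1.1]
        apply Real.rpow_le_rpow (mul_nonneg hsqn0.le (hl _).le) _ hq0.le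
        exact mul_le_mul_of_nonneg_left hlu hsqn0.le
      have h2 : (sqn * u) ^ q = aj * (u / 2) ^ (m + 1) := by
        rw [haj_def, div_mul_cancel₀]
        exact pow_ne_zero _ (div_ne_zero hu0.ne' two_ne_zero)
      calc ENNReal.ofReal (Metric.diam (cube (c kk.1.1) (l kk.1.1)) ^ q)
          ≤ ENNReal.ofReal (aj * (u / 2) ^ (m + 1)) := by
            apply ENNReal.ofReal_le_ofReal
            rw [← h2]; exact h1
        _ = ENNReal.ofReal aj * ENNReal.ofReal ((u / 2) ^ (m + 1)) := by
            rw [ENNReal.ofReal_mul haj0.le]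
        _ = ENNReal.ofReal aj * ENNReal.ofReal (u / 2) ^ (m + 1) := by
            rw [ENNReal.ofReal_pow (by positivity)]
        _ ≤ ENNReal.ofReal aj * ENNReal.ofReal (l kk.1.1) ^ (m + 1) := by
            apply mul_le_mul_right
            exact pow_le_pow_left' (ENNReal.ofReal_le_ofReal hul) _
        _ ≤ ENNReal.ofReal aj * volume (interior (cube (c kk.1.1) (l kk.1.1))) := by
            apply mul_le_mul_right
            exact volume_interior_cube_ge _ _
    -- step 2 : disjointness
    have hdisj' : Pairwise fun (a b : {k : S // jdx k.1 = j}) =>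
        Disjoint (interior (cube (c a.1.1) (l a.1.1))) (interior (cube (c b.1.1) (l b.1.1))) := by
      intro a b hab
      apply hdisj
      intro h
      exact hab (Subtype.ext (Subtype.ext h))
    have hmeas : ∀ kk : {k : S // jdx k.1 = j},
        MeasurableSet (interior (cube (c kk.1.1) (l kk.1.1))) :=
      fun kk => isOpen_interior.measurableSet
    have hsum_eq : (∑' kk : {k : S // jdx k.1 = j}, volume (interior (cube (c kk.1.1) (l kk.1.1))))
        = volume (⋃ kk : {k : S // jdx k.1 = j}, interior (cube (c kk.1.1) (l kk.1.1))) :=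
      (measure_iUnion hdisj' hmeas).symm
    -- step 3 : the union is contained in the slab
    have hsub_slab : (⋃ kk : {k : S // jdx k.1 = j}, interior (cube (c kk.1.1) (l kk.1.1)))
        ⊆ {x : EuclideanSpace ℝ (Fin (m + 1)) |
            (∀ i : Fin m, |x i.castSucc| ≤ 1) ∧
            |x (Fin.last m) - ψp (fun i => x i.castSucc)| ≤ δj} := by
      apply Set.iUnion_subset
      intro kk x hx
      have hx' : x ∈ cube (c kk.1.1) (l kk.1.1) := interior_subset hx
      obtain ⟨h1, h2⟩ := hslab kk.1 x hx'
      refine ⟨h1, h2.trans ?_⟩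
      rw [hδj_def]
      have hlu : l kk.1.1 ≤ u := by
        have h := hu2 kk.1
        rw [kk.2] at h
        rw [hu_def]
        exact h
      have : sqn * l kk.1.1 ≤ sqn * u := mul_le_mul_of_nonneg_left hlu hsqn0.le
      nlinarith [hK]
    have hslab_vol : volume {x : EuclideanSpace ℝ (Fin (m + 1)) |
            (∀ i : Fin m, |x i.castSucc| ≤ 1) ∧
            |x (Fin.last m) - ψp (fun i => x i.castSucc)| ≤ δj}
        ≤ ENNReal.ofReal (2 * δj) * ENNReal.ofReal 2 ^ m := volume_slab_le ψp hψpcont δj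
    -- combine
    have hchain : (∑' kk : {k : S // jdx k.1 = j},
        ENNReal.ofReal (Metric.diam (cube (c kk.1.1) (l kk.1.1)) ^ q))
        ≤ ENNReal.ofReal aj * (ENNReal.ofReal (2 * δj) * ENNReal.ofReal 2 ^ m) := by
      calc (∑' kk : {k : S // jdx k.1 = j},
            ENNReal.ofReal (Metric.diam (cube (c kk.1.1) (l kk.1.1)) ^ q))
          ≤ ∑' kk : {k : S // jdx k.1 = j},
            ENNReal.ofReal aj * volume (interior (cube (c kk.1.1) (l kk.1.1))) :=
            ENNReal.tsum_le_tsum hstep1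
        _ = ENNReal.ofReal aj
            * ∑' kk : {k : S // jdx k.1 = j}, volume (interior (cube (c kk.1.1) (l kk.1.1))) :=
            ENNReal.tsum_mul_left
        _ = ENNReal.ofReal aj
            * volume (⋃ kk : {k : S // jdx k.1 = j}, interior (cube (c kk.1.1) (l kk.1.1))) := by
            rw [hsum_eq]
        _ ≤ ENNReal.ofReal aj * (ENNReal.ofReal (2 * δj) * ENNReal.ofReal 2 ^ m) := by
            apply mul_le_mul_right
            exact (measure_mono hsub_slab).trans hslab_vol
    refine hchain.trans (le_of_eq ?_)
    rw [← ENNReal.ofReal_pow (by norm_num : (0:ℝ) ≤ 2), ← ENNReal.ofReal_mul (by positivity),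
      ← ENNReal.ofReal_mul haj0.le]
    congr 1
    -- real algebra : aj * (2 * δj * 2^m) = C₀ * ρ^j
    have hu' : u ≠ 0 := hu0.ne'
    have hid' : u ^ q * u / u ^ (m + 1) = ρ ^ j := by
      rw [hu_def, hρ_def]
      exact u_pow_identity q m j
    have hsplit : (2:ℝ) ^ (2*m+1) = 2 ^ (m+1) * 2 ^ m := by
      rw [← pow_add]
      congr 1
      ring
    rw [← hid', haj_def, hδj_def, hC₀_def, hsplit, Real.mul_rpow hsqn0.le hu0.le, div_pow]
    field_simp
    ring
  -- sum over dyadic levels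
  have hρsummable : Summable (fun j : ℕ => C₀ * ρ ^ j) :=
    (summable_geometric_of_lt_one hρ0.le hρ1).mul_left C₀
  have hsum_all : (∑' k : S, ENNReal.ofReal (Metric.diam (cube (c k.1) (l k.1)) ^ q))
      ≤ ENNReal.ofReal (C₀ * (1 - ρ)⁻¹) := by
    have heq1 : (∑' k : S, ENNReal.ofReal (Metric.diam (cube (c k.1) (l k.1)) ^ q))
        = ∑' p : Σ j : ℕ, {k : S // jdx k.1 = j},
            ENNReal.ofReal (Metric.diam (cube (c p.2.1.1) (l p.2.1.1)) ^ q) := by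
      rw [← Equiv.tsum_eq (Equiv.sigmaFiberEquiv (fun k : S => jdx k.1))
        (fun k => ENNReal.ofReal (Metric.diam (cube (c k.1) (l k.1)) ^ q))]
      rfl
    rw [heq1, ENNReal.tsum_sigma']
    calc (∑' j : ℕ, ∑' kk : {k : S // jdx k.1 = j},
          ENNReal.ofReal (Metric.diam (cube (c kk.1.1) (l kk.1.1)) ^ q))
        ≤ ∑' j : ℕ, ENNReal.ofReal (C₀ * ρ ^ j) := ENNReal.tsum_le_tsum hinner
      _ = ENNReal.ofReal (∑' j : ℕ, C₀ * ρ ^ j) := by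
          rw [ENNReal.ofReal_tsum_of_nonneg (fun j => by positivity) hρsummable]
      _ = ENNReal.ofReal (C₀ * (1 - ρ)⁻¹) := by
          rw [tsum_mul_left, tsum_geometric_of_lt_one hρ0.le hρ1]
  -- conversion back to real sums
  have hne : (∑' k : S, ENNReal.ofReal (Metric.diam (cube (c k.1) (l k.1)) ^ q)) ≠ ⊤ :=
    ne_top_of_le_ne_top ENNReal.ofReal_ne_top hsum_all
  have htoReal : ∀ k : S, (ENNReal.ofReal (Metric.diam (cube (c k.1) (l k.1)) ^ q)).toReal
      = Metric.diam (cube (c k.1) (l k.1)) ^ q := by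
    intro k
    rw [ENNReal.toReal_ofReal]
    exact Real.rpow_nonneg Metric.diam_nonneg q
  constructor
  · exact (ENNReal.summable_toReal hne).congr htoReal
  · have h1 : (∑' k : S, Metric.diam (cube (c k.1) (l k.1)) ^ q)
        = (∑' k : S, ENNReal.ofReal (Metric.diam (cube (c k.1) (l k.1)) ^ q)).toReal := by
      rw [ENNReal.tsum_toReal_eq (fun k => ENNReal.ofReal_ne_top)]
      exact (tsum_congr htoReal).symm
    rw [h1]
    calc (∑' k : S, ENNReal.ofReal (Metric.diam (cube (c k.1) (l k.1)) ^ q)).toReal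
        ≤ (ENNReal.ofReal (C₀ * (1 - ρ)⁻¹)).toReal :=
          ENNReal.toReal_mono ENNReal.ofReal_ne_top hsum_all
      _ = C₀ * (1 - ρ)⁻¹ := ENNReal.toReal_ofReal (mul_pos hC₀pos (inv_pos.mpr (by linarith))).le
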